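/- Let T_1, …, T_K with T_1 = {1}, T_i ⊆ {i−1, i} and |T_i| = 1 for each i, and let N_j = |{i : T_i = {j}}|. Then N_j ∈ {0,1,2} for all j, N_1 ≥ 1, Σ_j N_j = K, and between any two transmitters j < j' each carrying two messages (N_j = N_{j'} = 2), there exists k with j < k < j' and N_k = 0. -/

import Mathlib

/-!
Receiver `i` can only be served by transmitter `i` or `i - 1`, so transmitter `j` can only
serve receivers `j` and `j + 1`; this bounds every load by two and, since the loads partition
the `K` receivers, they sum to `K`. If `N j = N j' = 2` then `T (j + 1) = j` but `T j' = j'`,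
so walking from `j + 1` to `j'` there is a first receiver `m + 1` served by its own
transmitter while receiver `m` is not; then nobody is served by transmitter `m`.
-/

open Finset

/-- Receiver `i` is assigned to transmitter `T i ∈ {i - 1, i}`; the condition `2 ≤ i` encodes
that transmitter `0` does not exist. -/
def IsCellAssociation (K : ℕ) (T : ℕ → ℕ) : Prop :=
  ∀ i ∈ Icc 1 K, T i = i ∨ 2 ≤ i ∧ T i + 1 = i

namespace IsCellAssociation

variable {K : ℕ} {T : ℕ → ℕ}

theorem mapsTo (hT : IsCellAssociation K T) : Set.MapsTo T (Icc 1 K) (Icc 1 K) := by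
  intro i hi
  have hi' := mem_Icc.mp hi
  simp only [coe_Icc, Set.mem_Icc]
  rcases hT i hi with h | h <;> omega

theorem filter_eq_subset (hT : IsCellAssociation K T) (j : ℕ) :
    (Icc 1 K).filter (T · = j) ⊆ {j, j + 1} := by
  intro i hi
  obtain ⟨hiK, rfl⟩ := mem_filter.mp hi
  simp only [mem_insert, mem_singleton]
  rcases hT i hiK with h | h <;> omega

theorem card_filter_eq_le_two (hT : IsCellAssociation K T) (j : ℕ) :
    ((Icc 1 K).filter (T · = j)).card ≤ 2 :=
  (card_le_card (hT.filter_eq_subset j)).trans (card_insert_le _ _)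

theorem sum_card_filter_eq (hT : IsCellAssociation K T) :
    ∑ j ∈ Icc 1 K, ((Icc 1 K).filter (T · = j)).card = K := by
  rw [← card_eq_sum_card_fiberwise hT.mapsTo, Nat.card_Icc, Nat.add_sub_cancel]

theorem of_card_filter_eq_two (hT : IsCellAssociation K T) {j : ℕ}
    (hj : ((Icc 1 K).filter (T · = j)).card = 2) :
    T j = j ∧ T (j + 1) = j := by
  have hpair : (Icc 1 K).filter (T · = j) = {j, j + 1} :=
    eq_of_subset_of_card_le (hT.filter_eq_subset j) (hj ▸ card_insert_le _ _)
  have hjmem : j ∈ (Icc 1 K).filter (T · = j) := hpair ▸ mem_insert_self _ _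
  have hj1mem : j + 1 ∈ (Icc 1 K).filter (T · = j) := by simp [hpair]
  exact ⟨(mem_filter.mp hjmem).2, (mem_filter.mp hj1mem).2⟩

theorem filter_eq_eq_empty (hT : IsCellAssociation K T) {m : ℕ}
    (hm : T m ≠ m) (hm1 : T (m + 1) = m + 1) :
    (Icc 1 K).filter (T · = m) = ∅ := by
  refine eq_empty_of_forall_notMem fun i hi => ?_
  have hi' := hT.filter_eq_subset m hi
  obtain ⟨-, hTi⟩ := mem_filter.mp hi
  simp only [mem_insert, mem_singleton] at hi'
  rcases hi' with rfl | rfl <;> omega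

theorem exists_filter_eq_eq_empty_between (hT : IsCellAssociation K T) {j j' : ℕ}
    (hj : ((Icc 1 K).filter (T · = j)).card = 2)
    (hj' : ((Icc 1 K).filter (T · = j')).card = 2) (hjj' : j < j') :
    ∃ m, j < m ∧ m < j' ∧ (Icc 1 K).filter (T · = m) = ∅ := by
  obtain ⟨-, hTj1⟩ := hT.of_card_filter_eq_two hj
  obtain ⟨hTj', -⟩ := hT.of_card_filter_eq_two hj'
  have hex : ∃ n, T (j + 1 + n) = j + 1 + n := ⟨j' - (j + 1), by rwa [Nat.add_sub_cancel' hjj']⟩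
  have hpos : Nat.find hex ≠ 0 := fun h => by
    have := Nat.find_spec hex
    rw [h, add_zero, hTj1] at this
    omega
  have hle : Nat.find hex ≤ j' - (j + 1) :=
    Nat.find_min' hex (by rwa [Nat.add_sub_cancel' hjj'])
  obtain ⟨k, hk⟩ := Nat.exists_eq_add_one_of_ne_zero hpos
  have hk_not : T (j + 1 + k) ≠ j + 1 + k := Nat.find_min hex (by omega)
  have hk_succ : T (j + 1 + (k + 1)) = j + 1 + (k + 1) := hk ▸ Nat.find_spec hex
  exact ⟨j + 1 + k, by omega, by omega, hT.filter_eq_eq_empty hk_not hk_succ⟩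

end IsCellAssociation

/-- Properties of the load sequence `N j` of a cell-association assignment:
each `N j ≤ 2`, `N 1 ≥ 1`, `∑ j, N j = K`, and between any two transmitters each carrying
two messages there is a transmitter carrying none. -/
theorem stmt_7 (K : ℕ) (hK : 1 ≤ K) (T : ℕ → ℕ)
    (hT1 : T 1 = 1)
    (hT : ∀ i, 2 ≤ i → i ≤ K → T i = i ∨ T i = i - 1)
    (N : ℕ → ℕ)
    (hN : ∀ j, N j = ((Finset.Icc 1 K).filter (fun i => T i = j)).card) :
    (∀ j, N j ≤ 2) ∧ 1 ≤ N 1 ∧ (∑ j ∈ Finset.Icc 1 K, N j) = K ∧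
    (∀ j j', j < j' → N j = 2 → N j' = 2 →
      ∃ k, j < k ∧ k < j' ∧ N k = 0) := by
  have hassoc : IsCellAssociation K T := by
    intro i hi
    obtain ⟨h1i, hiK⟩ := mem_Icc.mp hi
    obtain rfl | h2i := h1i.eq_or_lt
    · exact Or.inl hT1
    · rcases hT i h2i hiK with h | h <;> omega
  simp only [hN]
  refine ⟨hassoc.card_filter_eq_le_two, card_pos.mpr ⟨1, by simp [hT1, hK]⟩,
    hassoc.sum_card_filter_eq, fun j j' hjj' hj hj' => ?_⟩
  obtain ⟨m, hjm, hmj', hm⟩ := hassoc.exists_filter_eq_eq_empty_between hj hj' hjj'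
  exact ⟨m, hjm, hmj', by rw [hm, card_empty]⟩
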